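/- arXiv:1407.2511 — 3 statements merged into one kernel-verified Lean document; each statement's English description precedes it below -/
import Mathlib

section
/- Let 1 ≤ i ≤ l−1 and let π_i be the map on {0,...,2^l−1} that swaps the bits at positions i and i−1 in the binary representation of its argument, i.e., π_i(j) = (j − 2^i·b_i(j) − 2^{i−1}·b_{i−1}(j)) + 2^i·b_{i−1}(j) + 2^{i−1}·b_i(j), where b_k(j) = 1 if (j mod 2^{k+1}) ≥ 2^k and b_k(j) = 0 otherwise. Then for all j1, j2 ∈ {0,...,2^l−1}, δ(π_i(j1), π_i(j2)) ≥ δ(j1, j2) − 1. -/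
/-!
Only the bits at positions `i` and `i - 1` move, so `π_i(j) ≡ j (mod 2^(i-1))`; this settles the
case `δ ≤ i`. If `δ > i`, then `j₁` and `j₂` share their bits `i` and `i - 1`, and `π_i` changes
both by the same amount, so `π_i(j₁) ≡ π_i(j₂) (mod 2^δ)`.
-/

/-- `bitsAgree l j1 j2` is the largest `δ ∈ {0,...,l}` such that `j1 ≡ j2 (mod 2^δ)`. -/
def bitsAgree (l j1 j2 : ℕ) : ℕ := Nat.findGreatest (fun d => j1 % 2 ^ d = j2 % 2 ^ d) l

/-- `bbit k j = 1` if `(j mod 2^(k+1)) ≥ 2^k`, and `0` otherwise (the `k`-th bit of `j`). -/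
def bbit (k j : ℕ) : ℕ := if 2 ^ k ≤ j % 2 ^ (k + 1) then 1 else 0

/-- The map swapping the bits at positions `i` and `i-1` (for `i ≥ 1`). -/
def piSwap (i j : ℕ) : ℕ :=
  (j - 2 ^ i * bbit i j - 2 ^ (i - 1) * bbit (i - 1) j)
    + 2 ^ i * bbit (i - 1) j + 2 ^ (i - 1) * bbit i j

lemma modEq_two_pow_bitsAgree (l j₁ j₂ : ℕ) : j₁ ≡ j₂ [MOD 2 ^ bitsAgree l j₁ j₂] :=
  Nat.findGreatest_spec (P := fun d => j₁ % 2 ^ d = j₂ % 2 ^ d) (Nat.zero_le l) Nat.modEq_one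

lemma le_bitsAgree {l d j₁ j₂ : ℕ} (hd : d ≤ l) (h : j₁ ≡ j₂ [MOD 2 ^ d]) :
    d ≤ bitsAgree l j₁ j₂ :=
  Nat.le_findGreatest hd h

lemma bitsAgree_le (l j₁ j₂ : ℕ) : bitsAgree l j₁ j₂ ≤ l :=
  Nat.findGreatest_le l

lemma bbit_eq_div_mod (k j : ℕ) : bbit k j = j / 2 ^ k % 2 := by
  have hsplit : j % 2 ^ (k + 1) = j % 2 ^ k + 2 ^ k * (j / 2 ^ k % 2) := Nat.mod_pow_succ
  have hlow : j % 2 ^ k < 2 ^ k := Nat.mod_lt _ (by positivity)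
  have hbit : j / 2 ^ k % 2 < 2 := Nat.mod_lt _ two_pos
  unfold bbit
  interval_cases h : j / 2 ^ k % 2 <;> simp only [hsplit, mul_zero, mul_one] <;> split_ifs <;> omega

lemma bbit_congr {k j₁ j₂ : ℕ} (h : j₁ ≡ j₂ [MOD 2 ^ (k + 1)]) : bbit k j₁ = bbit k j₂ := by
  unfold bbit
  rw [show j₁ % 2 ^ (k + 1) = j₂ % 2 ^ (k + 1) from h]

lemma two_pow_mul_bbit_add_le (k j : ℕ) :
    2 ^ (k + 1) * bbit (k + 1) j + 2 ^ k * bbit k j ≤ j := by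
  have hhigh : j % 2 ^ (k + 2) = j % 2 ^ (k + 1) + 2 ^ (k + 1) * bbit (k + 1) j := by
    rw [bbit_eq_div_mod]; exact Nat.mod_pow_succ
  have hlow : j % 2 ^ (k + 1) = j % 2 ^ k + 2 ^ k * bbit k j := by
    rw [bbit_eq_div_mod]; exact Nat.mod_pow_succ
  have := Nat.mod_le j (2 ^ (k + 2))
  omega

/-- The additive form of `piSwap`, free of the truncated subtraction in its definition. -/
lemma piSwap_add (k j : ℕ) :
    piSwap (k + 1) j + 2 ^ k * (2 * bbit (k + 1) j + bbit k j) =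
      j + 2 ^ k * (2 * bbit k j + bbit (k + 1) j) := by
  have hle := two_pow_mul_bbit_add_le k j
  simp only [piSwap, Nat.add_sub_cancel, Nat.sub_sub]
  zify [hle]
  ring

lemma piSwap_modEq_self (k j : ℕ) : piSwap (k + 1) j ≡ j [MOD 2 ^ k] :=
  calc piSwap (k + 1) j
      ≡ piSwap (k + 1) j + 2 ^ k * (2 * bbit (k + 1) j + bbit k j) [MOD 2 ^ k] :=
        (Nat.add_mul_mod_self_left _ _ _).symm
    _ = j + 2 ^ k * (2 * bbit k j + bbit (k + 1) j) := piSwap_add k j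
    _ ≡ j [MOD 2 ^ k] := Nat.add_mul_mod_self_left _ _ _

lemma piSwap_congr {k m j₁ j₂ : ℕ} (hm : k + 2 ≤ m) (h : j₁ ≡ j₂ [MOD 2 ^ m]) :
    piSwap (k + 1) j₁ ≡ piSwap (k + 1) j₂ [MOD 2 ^ m] := by
  have hhigh : bbit (k + 1) j₁ = bbit (k + 1) j₂ :=
    bbit_congr (h.of_dvd (pow_dvd_pow 2 hm))
  have hlow : bbit k j₁ = bbit k j₂ :=
    bbit_congr (h.of_dvd (pow_dvd_pow 2 (by omega)))
  refine Nat.ModEq.add_right_cancel' (2 ^ k * (2 * bbit (k + 1) j₂ + bbit k j₂)) ?_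
  rw [piSwap_add, ← hhigh, ← hlow, piSwap_add, hhigh, hlow]
  exact h.add_right _

theorem delta_piSwap_general (l i j1 j2 : ℕ) (hi1 : 1 ≤ i) :
    bitsAgree l j1 j2 - 1 ≤ bitsAgree l (piSwap i j1) (piSwap i j2) := by
  obtain ⟨k, rfl⟩ := Nat.exists_eq_add_of_le' hi1
  set d := bitsAgree l j1 j2
  have hagree : j1 ≡ j2 [MOD 2 ^ d] := modEq_two_pow_bitsAgree l j1 j2
  refine le_bitsAgree ((Nat.sub_le d 1).trans (bitsAgree_le l j1 j2)) ?_
  rcases le_or_gt d (k + 1) with hd | hd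
  · have hdvd : 2 ^ (d - 1) ∣ 2 ^ k := pow_dvd_pow 2 (by omega)
    exact ((piSwap_modEq_self k j1).of_dvd hdvd).trans
      ((hagree.of_dvd (pow_dvd_pow 2 (Nat.sub_le d 1))).trans
        ((piSwap_modEq_self k j2).of_dvd hdvd).symm)
  · exact (piSwap_congr hd hagree).of_dvd (pow_dvd_pow 2 (Nat.sub_le d 1))

theorem delta_piSwap (l i j1 j2 : ℕ) (hi1 : 1 ≤ i) (hi2 : i ≤ l - 1)
    (h1 : j1 < 2 ^ l) (h2 : j2 < 2 ^ l) :
    bitsAgree l j1 j2 - 1 ≤ bitsAgree l (piSwap i j1) (piSwap i j2) :=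
  delta_piSwap_general l i j1 j2 hi1
end

section
/- If δ(π_i(j1), π_i(j2)) ≠ δ(j1, j2) for some 1 ≤ i ≤ l−1 and j1, j2 ∈ {0,...,2^l−1}, then δ(j1, j2) ∈ {i−1, i}. -/
lemma bbit_le_one (k j : ℕ) : bbit k j ≤ 1 := by unfold bbit; split <;> omega

lemma decomp (e j : ℕ) :
    j = 2^(e+2)*(j/2^(e+2)) + 2^(e+1)*bbit (e+1) j + 2^e * bbit e j + j % 2^e := by
  have ha : 0 < 2^e := by positivity
  have he1 : 2^(e+1) = 2*2^e := by ring
  have he2 : 2^(e+2) = 4*2^e := by ring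
  have hj : 2^(e+2)*(j/2^(e+2)) + j % 2^(e+2) = j := Nat.div_add_mod j (2^(e+2))
  have hr2 : j % 2^(e+2) < 2^(e+2) := Nat.mod_lt _ (by positivity)
  have hr1 : j % 2^(e+1) = j % 2^(e+2) % 2^(e+1) :=
    (Nat.mod_mod_of_dvd j (pow_dvd_pow 2 (by omega))).symm
  have hr0 : j % 2^e = j % 2^(e+1) % 2^e :=
    (Nat.mod_mod_of_dvd j (pow_dvd_pow 2 (by omega))).symm
  have hd1 : 2^(e+1)*(j % 2^(e+2) / 2^(e+1)) + j % 2^(e+2) % 2^(e+1) = j % 2^(e+2) :=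
    Nat.div_add_mod _ _
  have hd0 : 2^e*(j % 2^(e+1) / 2^e) + j % 2^(e+1) % 2^e = j % 2^(e+1) :=
    Nat.div_add_mod _ _
  have hb1 : j % 2^(e+1) < 2^(e+1) := Nat.mod_lt _ (by positivity)
  have hk1 : j % 2^(e+2) / 2^(e+1) ≤ 1 := by
    apply Nat.lt_succ_iff.mp; apply Nat.div_lt_of_lt_mul; omega
  have hk0 : j % 2^(e+1) / 2^e ≤ 1 := by
    apply Nat.lt_succ_iff.mp; apply Nat.div_lt_of_lt_mul; omega
  unfold bbit
  simp only [show e+1+1 = e+2 from rfl]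
  rcases Nat.le_one_iff_eq_zero_or_eq_one.mp hk1 with h | h <;>
    rcases Nat.le_one_iff_eq_zero_or_eq_one.mp hk0 with h' | h' <;>
      rw [h] at hd1 <;> rw [h'] at hd0 <;> split_ifs <;> omega

lemma piSwap_eq (e j : ℕ) :
    piSwap (e+1) j = 2^(e+2)*(j/2^(e+2)) + 2^(e+1)*bbit e j + 2^e * bbit (e+1) j + j % 2^e := by
  have h := decomp e j
  have hA := bbit_le_one (e+1) j
  have hB := bbit_le_one e j
  have ha : 0 < 2^e := by positivity
  have he1 : 2^(e+1) = 2*2^e := by ring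
  have he2 : 2^(e+2) = 4*2^e := by ring
  unfold piSwap
  simp only [Nat.add_sub_cancel]
  omega

lemma eval_lemma (e q A B t : ℕ) (hA : A ≤ 1) (hB : B ≤ 1) (ht : t < 2^e) :
    bbit (e+1) (2^(e+2)*q + 2^(e+1)*A + 2^e*B + t) = A ∧
    bbit e (2^(e+2)*q + 2^(e+1)*A + 2^e*B + t) = B ∧
    (2^(e+2)*q + 2^(e+1)*A + 2^e*B + t) % 2^e = t ∧
    (2^(e+2)*q + 2^(e+1)*A + 2^e*B + t) / 2^(e+2) = q := by
  have ha : 0 < 2^e := by positivity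
  have he1 : 2^(e+1) = 2*2^e := by ring
  have he2 : 2^(e+2) = 4*2^e := by ring
  set n := 2^(e+2)*q + 2^(e+1)*A + 2^e*B + t with hn
  have hlow : 2^(e+1)*A + 2^e*B + t < 2^(e+2) := by
    interval_cases A <;> interval_cases B <;> omega
  have hre : n = 2^(e+2)*q + (2^(e+1)*A + (2^e*B + t)) := by rw [hn]; ring
  have hn2 : n % 2^(e+2) = 2^(e+1)*A + (2^e*B + t) := by
    rw [hre, Nat.mul_add_mod]
    exact Nat.mod_eq_of_lt (by omega)
  have hq : n / 2^(e+2) = q := by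
    have h0 : (2^(e+1)*A + (2^e*B + t)) / 2^(e+2) = 0 := Nat.div_eq_of_lt (by omega)
    rw [hre, Nat.mul_add_div (by positivity), h0, add_zero]
  have hn1 : n % 2^(e+1) = 2^e*B + t := by
    rw [← Nat.mod_mod_of_dvd n (pow_dvd_pow 2 (by omega : e+1 ≤ e+2)), hn2,
      Nat.mul_add_mod]
    exact Nat.mod_eq_of_lt (by interval_cases B <;> omega)
  have hn0 : n % 2^e = t := by
    have : (2^e*B + t) % 2^e = t % 2^e := by
      rw [Nat.mul_add_mod]
    rw [← Nat.mod_mod_of_dvd n (pow_dvd_pow 2 (by omega : e ≤ e+1)), hn1, this,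
      Nat.mod_eq_of_lt ht]
  refine ⟨?_, ?_, hn0, hq⟩
  · unfold bbit
    simp only [show e+1+1 = e+2 from rfl]
    rw [hn2]
    split_ifs with h <;> interval_cases A <;> interval_cases B <;> omega
  · unfold bbit
    rw [hn1]
    split_ifs with h <;> interval_cases A <;> interval_cases B <;> omega

lemma piSwap_invol (e j : ℕ) : piSwap (e+1) (piSwap (e+1) j) = j := by
  obtain ⟨hA', hB', ht', hq'⟩ := eval_lemma e (j/2^(e+2)) (bbit e j) (bbit (e+1) j)
    (j % 2^e) (bbit_le_one _ _) (bbit_le_one _ _) (Nat.mod_lt _ (by positivity))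
  have hs : piSwap (e+1) j
      = 2^(e+2)*(j/2^(e+2)) + 2^(e+1)*bbit e j + 2^e*bbit (e+1) j + j % 2^e := piSwap_eq e j
  rw [piSwap_eq e (piSwap (e+1) j), hs, hA', hB', ht', hq']
  exact (decomp e j).symm

lemma piSwap_mod_low (e d j : ℕ) (hd : d ≤ e) : piSwap (e+1) j % 2^d = j % 2^d := by
  have key : ∀ x w : ℕ, 2^d ∣ x → (x + w) % 2^d = w % 2^d := by
    rintro x w ⟨c, rfl⟩; rw [Nat.mul_add_mod]
  have d2 : (2:ℕ)^d ∣ 2^(e+2)*(j/2^(e+2)) := Dvd.dvd.mul_right (pow_dvd_pow 2 (by omega)) _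
  have d1 : ∀ m, (2:ℕ)^d ∣ 2^(e+1)*m := fun m => Dvd.dvd.mul_right (pow_dvd_pow 2 (by omega)) _
  have d0 : ∀ m, (2:ℕ)^d ∣ 2^e*m := fun m => Dvd.dvd.mul_right (pow_dvd_pow 2 hd) _
  rw [piSwap_eq, key _ _ (dvd_add (dvd_add d2 (d1 _)) (d0 _))]
  conv_rhs => rw [decomp e j]
  rw [key _ _ (dvd_add (dvd_add d2 (d1 _)) (d0 _))]

lemma bbit_shift (k d q c : ℕ) (h : k < d) : bbit k (2^d*q + c) = bbit k c := by
  obtain ⟨m, hm⟩ : (2:ℕ)^(k+1) ∣ 2^d := pow_dvd_pow 2 h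
  unfold bbit
  rw [hm, show 2^(k+1)*m*q + c = 2^(k+1)*(m*q) + c by ring, Nat.mul_add_mod]

lemma piSwap_shift (e d q c : ℕ) (h : e+2 ≤ d) :
    piSwap (e+1) (2^d*q + c) = 2^d*q + piSwap (e+1) c := by
  have hb1 : bbit (e+1) (2^d*q+c) = bbit (e+1) c := bbit_shift _ _ _ _ (by omega)
  have hb0 : bbit e (2^d*q+c) = bbit e c := bbit_shift _ _ _ _ (by omega)
  have hle := decomp e c
  unfold piSwap
  simp only [Nat.add_sub_cancel]
  rw [hb1, hb0]
  omega

lemma piSwap_mod_high (e d j : ℕ) (h : e+2 ≤ d) :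
    piSwap (e+1) j % 2^d = piSwap (e+1) (j % 2^d) % 2^d := by
  conv_lhs => rw [← Nat.div_add_mod j (2^d)]
  rw [piSwap_shift e d _ _ h, Nat.mul_add_mod]


lemma bitsAgree_le_s5 (l j1 j2 : ℕ) : bitsAgree l j1 j2 ≤ l := Nat.findGreatest_le l

lemma bitsAgree_spec (l j1 j2 : ℕ) :
    j1 % 2^(bitsAgree l j1 j2) = j2 % 2^(bitsAgree l j1 j2) :=
  Nat.findGreatest_spec (P := fun d => j1 % 2 ^ d = j2 % 2 ^ d) (Nat.zero_le l) (by simp [Nat.mod_one])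

lemma bitsAgree_is_greatest (l j1 j2 k : ℕ) (h : bitsAgree l j1 j2 < k) (hk : k ≤ l) :
    j1 % 2^k ≠ j2 % 2^k :=
  Nat.findGreatest_is_greatest (P := fun d => j1 % 2 ^ d = j2 % 2 ^ d) h hk

lemma bitsAgree_eq_of (l j1 j2 δ : ℕ) (hδl : δ ≤ l) (hP : j1 % 2^δ = j2 % 2^δ)
    (hnP : j1 % 2^(δ+1) ≠ j2 % 2^(δ+1)) : bitsAgree l j1 j2 = δ := by
  refine le_antisymm ?_ (Nat.le_findGreatest (P := fun d => j1 % 2 ^ d = j2 % 2 ^ d) hδl hP)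
  by_contra hlt
  push_neg at hlt
  have hg := bitsAgree_spec l j1 j2
  apply hnP
  rw [← Nat.mod_mod_of_dvd j1 (pow_dvd_pow 2 (show δ+1 ≤ bitsAgree l j1 j2 from hlt)), hg,
    Nat.mod_mod_of_dvd j2 (pow_dvd_pow 2 (show δ+1 ≤ bitsAgree l j1 j2 from hlt))]

theorem delta_piSwap_ne_cases (l i j1 j2 : ℕ) (hi1 : 1 ≤ i) (hi2 : i ≤ l - 1)
    (h1 : j1 < 2 ^ l) (h2 : j2 < 2 ^ l)
    (hne : bitsAgree l (piSwap i j1) (piSwap i j2) ≠ bitsAgree l j1 j2) :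
    bitsAgree l j1 j2 = i - 1 ∨ bitsAgree l j1 j2 = i := by
  obtain ⟨e, rfl⟩ : ∃ e, i = e + 1 := ⟨i-1, by omega⟩
  have hl : e + 2 ≤ l := by omega
  simp only [Nat.add_sub_cancel]
  by_contra hcon
  push_neg at hcon
  obtain ⟨hc1, hc2⟩ := hcon
  apply hne
  set δ := bitsAgree l j1 j2 with hδ
  have hδl : δ ≤ l := bitsAgree_le_s5 l j1 j2
  have hP : j1 % 2^δ = j2 % 2^δ := bitsAgree_spec l j1 j2
  rcases eq_or_lt_of_le hδl with heq | hlt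
  · rw [heq] at hP
    rw [Nat.mod_eq_of_lt h1, Nat.mod_eq_of_lt h2] at hP
    subst hP
    rw [heq]
    exact le_antisymm (bitsAgree_le_s5 _ _ _) (Nat.le_findGreatest (P := fun d => piSwap (e+1) j1 % 2 ^ d = piSwap (e+1) j1 % 2 ^ d) le_rfl rfl)
  · have hnP : j1 % 2^(δ+1) ≠ j2 % 2^(δ+1) := bitsAgree_is_greatest l j1 j2 _ (by omega) (by omega)
    rcases (by omega : δ + 1 ≤ e ∨ e + 2 ≤ δ) with hcase | hcase
    · apply bitsAgree_eq_of l _ _ δ hδl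
      · rw [piSwap_mod_low e δ j1 (by omega), piSwap_mod_low e δ j2 (by omega)]; exact hP
      · rw [piSwap_mod_low e (δ+1) j1 (by omega), piSwap_mod_low e (δ+1) j2 (by omega)]
        exact hnP
    · apply bitsAgree_eq_of l _ _ δ hδl
      · rw [piSwap_mod_high e δ j1 hcase, piSwap_mod_high e δ j2 hcase, hP]
      · intro hEq
        apply hnP
        have key : piSwap (e+1) (piSwap (e+1) j1) % 2^(δ+1)
            = piSwap (e+1) (piSwap (e+1) j2) % 2^(δ+1) := by
          rw [piSwap_mod_high e (δ+1) (piSwap (e+1) j1) (by omega), hEq,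
            ← piSwap_mod_high e (δ+1) (piSwap (e+1) j2) (by omega)]
        rwa [piSwap_invol, piSwap_invol] at key
end

section
/- In G_l, starting from a_l = v_l(0) and b_l = v_l(2^{l−1}) and repeatedly following port 2, after i ≤ l−1 steps the walk from a_l reaches v_{l−i}(0) and the walk from b_l reaches v_{l−i}(2^{l−1−i}). -/
/-- A port-labeled network: each node `v` has degree `deg v`, and for each port
`p ∈ {1,…,deg v}`, `next v p` is the neighbor reached via port `p` and `ret v p`
is the port number of the same edge at that neighbor (i.e. `end(v,p) = λ(next(v,p), v)`). -/
structure PortNetwork (V : Type*) where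
  deg : V → ℕ
  next : V → ℕ → V
  ret : V → ℕ → ℕ

/-- Coherence of a port network: following a valid port and then the corresponding
return port leads back, with matching labels. -/
def PortNetwork.Coherent {V : Type*} (N : PortNetwork V) : Prop :=
  ∀ v p, 1 ≤ p → p ≤ N.deg v →
    1 ≤ N.ret v p ∧ N.ret v p ≤ N.deg (N.next v p) ∧
      N.next (N.next v p) (N.ret v p) = v ∧ N.ret (N.next v p) (N.ret v p) = p

/-- Trees with edges labeled by pairs of port numbers: the datatype of (truncated) views. -/
inductive ViewTree : Type
  | node : List (ℕ × ℕ × ViewTree) → ViewTree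

/-- The view of node `v` truncated to depth `k`: the root has one child per port
`p ∈ {1,…,deg v}`, the corresponding edge carrying the label pair `(p, end(v,p))`,
and the child subtree is the view of `next v p` truncated to depth `k-1`. -/
def view {V : Type*} (N : PortNetwork V) : ℕ → V → ViewTree
  | 0, _ => ViewTree.node []
  | k + 1, v => ViewTree.node
      ((List.range (N.deg v)).map fun t =>
        (t + 1, N.ret v (t + 1), view N k (N.next v (t + 1))))

/-- A list of ports is a valid walk from `v` if each successive port is legal
at the node reached so far. -/
def ValidWalk {V : Type*} (N : PortNetwork V) : V → List ℕ → Prop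
  | _, [] => True
  | v, p :: ps => 1 ≤ p ∧ p ≤ N.deg v ∧ ValidWalk N (N.next v p) ps

/-- The endpoint of the walk from `v` following the given list of ports. -/
def walkEnd {V : Type*} (N : PortNetwork V) : V → List ℕ → V
  | v, [] => v
  | v, p :: ps => walkEnd N (N.next v p) ps

/-- The signature of a walk: the list of pairs (outgoing port, incoming port at the
other end) of the successively traversed edges. Two walks are isomorphic iff their
signatures are equal. -/
def walkSig {V : Type*} (N : PortNetwork V) : V → List ℕ → List (ℕ × ℕ)
  | _, [] => []
  | v, p :: ps => (p, N.ret v p) :: walkSig N (N.next v p) ps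

/-- The permutation `π_i`: identity for `i = 0`, bit swap of positions `i, i-1` otherwise. -/
def piPerm (i j : ℕ) : ℕ := if i = 0 then j else piSwap i j

/-- The port-labeled graph `G_l` of the paper, on nodes `v_i(j) = (i, j)` with levels
`i ∈ {0,…,l+1}` and columns `j ∈ {0,…,2^l-1}`.
* Stage 1: a matching inside level 0 joining `v_0(j)` and `v_0(j ^^^ 1)`, with port
  `1 + ((j+1) mod 2)` at `v_0(j)`.
* Stage 2: a clique inside level `l+1`, with `λ(v_{l+1}(j), v_{l+1}((j+p) mod 2^l)) = p`.
* Stage 3: edges from `v_{l+1}(j)` to `v_i(j)` for every `i ≤ l`, with port `2^l + i`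
  at the top and port `1` (or `1 + (j mod 2)` at level 0) at the bottom.
* Stage 4: matchings between consecutive levels via `π_i`, with ports `3` (up), `2` (down). -/
def Gl (l : ℕ) : PortNetwork (ℕ × ℕ) where
  deg := fun v => if v.1 = l + 1 then 2 ^ l + l else if v.1 = l then 2 else 3
  next := fun v p =>
    if v.1 = l + 1 then
      (if p ≤ 2 ^ l - 1 then (l + 1, (v.2 + p) % 2 ^ l) else (p - 2 ^ l, v.2))
    else if v.1 = 0 then
      (if p = 3 then (1, v.2)
       else if p = 1 + v.2 % 2 then (l + 1, v.2)
       else (0, v.2 ^^^ 1))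
    else
      (if p = 1 then (l + 1, v.2)
       else if p = 2 then (v.1 - 1, piPerm (v.1 - 1) v.2)
       else (v.1 + 1, piPerm v.1 v.2))
  ret := fun v p =>
    if v.1 = l + 1 then
      (if p ≤ 2 ^ l - 1 then 2 ^ l - p
       else if p = 2 ^ l then 1 + v.2 % 2
       else 1)
    else if v.1 = 0 then
      (if p = 3 then 2
       else if p = 1 + v.2 % 2 then 2 ^ l
       else 1 + v.2 % 2)
    else
      (if p = 1 then 2 ^ l + v.1
       else if p = 2 then 3
       else 2)


lemma bbit_zero_right (k : ℕ) : bbit k 0 = 0 := by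
  simp [bbit]

lemma bbit_two_pow_self (k : ℕ) : bbit k (2 ^ k) = 1 := by
  simp [bbit, Nat.mod_eq_of_lt (Nat.pow_lt_pow_right one_lt_two k.lt_succ_self)]

lemma bbit_two_pow_succ (k : ℕ) : bbit k (2 ^ (k + 1)) = 0 := by
  simp [bbit]

lemma piPerm_zero_right (i : ℕ) : piPerm i 0 = 0 := by
  simp [piPerm, piSwap, bbit_zero_right]

lemma piPerm_two_pow_succ (k : ℕ) : piPerm (k + 1) (2 ^ (k + 1)) = 2 ^ k := by
  simp [piPerm, piSwap, bbit_two_pow_self, bbit_two_pow_succ]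

lemma Gl_next_two {l m : ℕ} (j : ℕ) (hm0 : m ≠ 0) (hml : m ≤ l) :
    (Gl l).next (m, j) 2 = (m - 1, piPerm (m - 1) j) := by
  simp [Gl, hm0, show m ≠ l + 1 by omega]

lemma Gl_iterate_next_two_zero {l m k : ℕ} (hml : m ≤ l) (hk : k ≤ m) :
    (fun v => (Gl l).next v 2)^[k] (m, 0) = (m - k, 0) := by
  induction k with
  | zero => rfl
  | succ k ih =>
    rw [Function.iterate_succ_apply', ih (by omega), Gl_next_two _ (by omega) (by omega),
      piPerm_zero_right, Nat.sub_sub]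

lemma Gl_iterate_next_two_two_pow {l m k : ℕ} (hml : m ≤ l) (hk : k ≤ m - 1) :
    (fun v => (Gl l).next v 2)^[k] (m, 2 ^ (m - 1)) = (m - k, 2 ^ (m - 1 - k)) := by
  induction k with
  | zero => rfl
  | succ k ih =>
    have hlevel : m - k - 1 = m - 1 - (k + 1) + 1 := by omega
    rw [Function.iterate_succ_apply', ih (by omega), Gl_next_two _ (by omega) (by omega), hlevel,
      show m - 1 - k = m - 1 - (k + 1) + 1 by omega, piPerm_two_pow_succ]
    congr 1
    omega

theorem port_two_walk_general (l i : ℕ) (hi : i ≤ l - 1) :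
    (fun v => (Gl l).next v 2)^[i] (l, 0) = (l - i, 0) ∧
    (fun v => (Gl l).next v 2)^[i] (l, 2 ^ (l - 1)) = (l - i, 2 ^ (l - 1 - i)) :=
  ⟨Gl_iterate_next_two_zero le_rfl (by omega), Gl_iterate_next_two_two_pow le_rfl hi⟩

/-- Starting from `a_l = v_l(0)` and `b_l = v_l(2^{l-1})` in `G_l` and repeatedly
following port `2`, after `i ≤ l-1` steps the two walks reach `v_{l-i}(0)` and
`v_{l-i}(2^{l-1-i})`, respectively. -/
theorem port_two_walk (l i : ℕ) (hl : 1 ≤ l) (hi : i ≤ l - 1) :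
    (fun v => (Gl l).next v 2)^[i] (l, 0) = (l - i, 0) ∧
    (fun v => (Gl l).next v 2)^[i] (l, 2 ^ (l - 1)) = (l - i, 2 ^ (l - 1 - i)) :=
  port_two_walk_general l i hi
end
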